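/- arXiv:2409.13263 — 5 statements merged into one kernel-verified Lean document; each statement's English description precedes it below -/
import Mathlib

section
/- For coprime positive integers a, b with b ≥ 2 (so that a/b is not an integer) and any positive integer k, the Taylor expansion in x around 0 of the function Ψ(x) = ((1+x)^{a/b} + 1)^{bk} has infinitely many negative coefficients. -/
/-!
Near `x = 0` the binomial theorem gives `Ψ x = ∑ⱼ C(n, j) (1 + x) ^ (α j)` with `n = b k` and
`α = a / b`, so `Ψ⁽ʰ⁾(0) = ∑ⱼ C(n, j) (α j)ₕ` with the falling factorial `(γ)ₕ`. Euler's limit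
formula for `Γ` gives `|(γ)ₕ| ≍ h! h ^ (-γ - 1)` for `γ ∉ ℕ`, while `(γ)ₕ = 0` for large `h` when
`γ ∈ ℕ`; hence the smallest non-integral exponent `α` dominates and `Ψ⁽ʰ⁾(0) / (α)ₕ → n > 0`.
Since `α ∉ ℕ`, the sign of `(α)ₕ` alternates once `h > α`, so infinitely many coefficients are
negative.
-/

open Filter Topology Polynomial

lemma descPochhammer_eval_ne_zero {γ : ℝ} (hγ : ∀ m : ℕ, γ ≠ m) (h : ℕ) :
    (descPochhammer ℝ h).eval γ ≠ 0 := by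
  rw [descPochhammer_eval_eq_prod_range]
  exact Finset.prod_ne_zero_iff.2 fun i _ => sub_ne_zero.2 (hγ i)

lemma eventually_descPochhammer_eval_natCast_eq_zero (m : ℕ) :
    ∀ᶠ h in atTop, (descPochhammer ℝ h).eval (m : ℝ) = 0 :=
  eventually_gt_atTop m |>.mono fun _ => descPochhammer_eval_coe_nat_of_lt

lemma frequently_descPochhammer_eval_neg {γ : ℝ} (hγ : ∀ m : ℕ, γ ≠ m) :
    ∃ᶠ h in atTop, (descPochhammer ℝ h).eval γ < 0 := by
  refine frequently_atTop.2 fun N => ?_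
  obtain ⟨h, hNh, hγh⟩ : ∃ h, N ≤ h ∧ γ < h :=
    ⟨N + ⌈γ⌉₊ + 1, by omega, by push_cast; linarith [Nat.le_ceil γ, N.cast_nonneg (α := ℝ)]⟩
  rcases (descPochhammer_eval_ne_zero hγ h).lt_or_gt with hneg | hpos
  · exact ⟨h, hNh, hneg⟩
  · refine ⟨h + 1, by omega, ?_⟩
    rw [descPochhammer_succ_eval]
    exact mul_neg_of_pos_of_neg hpos (sub_neg.2 hγh)

lemma Real.GammaSeq_neg (γ : ℝ) (n : ℕ) :
    Real.GammaSeq (-γ) n =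
      (n : ℝ) ^ (-γ) * n.factorial / ((-1) ^ (n + 1) * (descPochhammer ℝ (n + 1)).eval γ) := by
  have hprod : ∏ j ∈ Finset.range (n + 1), (-γ + j) = ∏ j ∈ Finset.range (n + 1), -(γ - j) :=
    Finset.prod_congr rfl fun _ _ => by ring
  rw [Real.GammaSeq, hprod, Finset.prod_neg, Finset.card_range, descPochhammer_eval_eq_prod_range]

-- No non-vanishing hypothesis is needed: with `x / 0 = 0` both sides vanish together.
lemma descPochhammer_eval_div_eq_rpow_mul_GammaSeq_div {α β : ℝ} {n : ℕ} (hn : n ≠ 0) :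
    (descPochhammer ℝ (n + 1)).eval β / (descPochhammer ℝ (n + 1)).eval α =
      (n : ℝ) ^ (α - β) * (Real.GammaSeq (-α) n / Real.GammaSeq (-β) n) := by
  have hn_pos : (0 : ℝ) < n := by positivity
  have hpow : (n : ℝ) ^ (α - β) * (n : ℝ) ^ (-α) = (n : ℝ) ^ (-β) := by
    rw [← Real.rpow_add hn_pos]; ring_nf
  have hβ : (n : ℝ) ^ (-β) ≠ 0 := (Real.rpow_pos_of_pos hn_pos _).ne'
  have hfac : (n.factorial : ℝ) ≠ 0 := by positivity
  have hsign : ((-1 : ℝ) ^ (n + 1)) ≠ 0 := by simp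
  rw [Real.GammaSeq_neg, Real.GammaSeq_neg]
  simp only [div_eq_mul_inv, mul_inv, inv_inv]
  calc _ = ((n : ℝ) ^ (α - β) * (n : ℝ) ^ (-α) * ((n : ℝ) ^ (-β))⁻¹) *
        ((n.factorial : ℝ) * (n.factorial : ℝ)⁻¹) * ((-1 : ℝ) ^ (n + 1) * ((-1 : ℝ) ^ (n + 1))⁻¹) *
        ((descPochhammer ℝ (n + 1)).eval β * ((descPochhammer ℝ (n + 1)).eval α)⁻¹) := by
        rw [hpow]; field_simp
    _ = _ := by ring

lemma tendsto_descPochhammer_eval_div_of_lt {α β : ℝ} (hαβ : α < β) :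
    Tendsto (fun h => (descPochhammer ℝ h).eval β / (descPochhammer ℝ h).eval α) atTop (𝓝 0) := by
  by_cases hβ : ∃ m : ℕ, β = m
  · obtain ⟨m, rfl⟩ := hβ
    refine tendsto_const_nhds.congr' ?_
    filter_upwards [eventually_descPochhammer_eval_natCast_eq_zero m] with h hh
    rw [hh, zero_div]
  push Not at hβ
  have hΓ : Real.Gamma (-β) ≠ 0 := Real.Gamma_ne_zero fun m => by simpa using hβ m
  have hpow : Tendsto (fun n : ℕ => (n : ℝ) ^ (α - β)) atTop (𝓝 0) := by
    have := (tendsto_rpow_neg_atTop (sub_pos.2 hαβ)).comp tendsto_natCast_atTop_atTop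
    rwa [neg_sub] at this
  have hlim := hpow.mul
    ((Real.GammaSeq_tendsto_Gamma (-α)).div (Real.GammaSeq_tendsto_Gamma (-β)) hΓ)
  rw [zero_mul] at hlim
  rw [← tendsto_add_atTop_iff_nat 1]
  refine hlim.congr' ?_
  filter_upwards [eventually_ne_atTop 0] with n hn
  exact (descPochhammer_eval_div_eq_rpow_mul_GammaSeq_div hn).symm

lemma iteratedDeriv_one_add_rpow_zero (r : ℝ) (h : ℕ) :
    iteratedDeriv h (fun x : ℝ => (1 + x) ^ r) 0 = (descPochhammer ℝ h).eval r := by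
  rw [iteratedDeriv_comp_const_add h (fun x : ℝ => x ^ r), iteratedDeriv_eq_iterate]
  simp [Real.iter_deriv_rpow_const]

lemma iteratedDeriv_one_add_rpow_add_one_pow_zero (α : ℝ) (n h : ℕ) :
    iteratedDeriv h (fun x : ℝ => ((1 + x) ^ α + 1) ^ n) 0 =
      ∑ j ∈ Finset.range (n + 1), (n.choose j : ℝ) * (descPochhammer ℝ h).eval (α * j) := by
  have hexpand : (fun x : ℝ => ((1 + x) ^ α + 1) ^ n) =ᶠ[𝓝 0]
      fun x => ∑ j ∈ Finset.range (n + 1), (n.choose j : ℝ) * (1 + x) ^ (α * j) := by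
    filter_upwards [Ioi_mem_nhds (show (-1 : ℝ) < 0 by norm_num)] with x hx
    have hx : 0 ≤ 1 + x := by linarith [Set.mem_Ioi.1 hx]
    rw [add_pow]
    refine Finset.sum_congr rfl fun j _ => ?_
    rw [Real.rpow_mul hx, Real.rpow_natCast]
    ring
  rw [hexpand.iteratedDeriv_eq, iteratedDeriv_fun_sum]
  · simp only [iteratedDeriv_const_mul_field, iteratedDeriv_one_add_rpow_zero]
  · intro j _
    refine contDiffAt_const.mul ?_
    exact (contDiffAt_const.add contDiffAt_id).rpow_const_of_ne (by norm_num)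

theorem tendsto_iteratedDeriv_one_add_rpow_add_one_pow_div_descPochhammer_eval {α : ℝ}
    (hα : 0 < α) (hαℕ : ∀ m : ℕ, α ≠ m) (n : ℕ) :
    Tendsto (fun h => iteratedDeriv h (fun x : ℝ => ((1 + x) ^ α + 1) ^ n) 0 /
      (descPochhammer ℝ h).eval α) atTop (𝓝 n) := by
  simp only [iteratedDeriv_one_add_rpow_add_one_pow_zero, Finset.sum_div, mul_div_assoc]
  have hterm : ∀ j ∈ Finset.range (n + 1), Tendsto (fun h => (n.choose j : ℝ) *
      ((descPochhammer ℝ h).eval (α * j) / (descPochhammer ℝ h).eval α)) atTop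
      (𝓝 ((n.choose j : ℝ) * if j = 1 then 1 else 0)) := by
    intro j _
    refine tendsto_const_nhds.mul ?_
    rcases lt_trichotomy j 1 with hj | rfl | hj
    · obtain rfl : j = 0 := by omega
      refine tendsto_const_nhds.congr' ?_
      filter_upwards [eventually_ne_atTop 0] with h hh
      simp [hh]
    · simpa using tendsto_const_nhds.congr fun h =>
        (div_self (descPochhammer_eval_ne_zero hαℕ h)).symm
    · rw [if_neg hj.ne']
      exact tendsto_descPochhammer_eval_div_of_lt (lt_mul_right hα (by exact_mod_cast hj))
  convert tendsto_finsetSum _ hterm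
  simp

theorem frequently_iteratedDeriv_one_add_rpow_add_one_pow_neg {α : ℝ} (hα : 0 < α)
    (hαℕ : ∀ m : ℕ, α ≠ m) {n : ℕ} (hn : n ≠ 0) :
    ∃ᶠ h in atTop, iteratedDeriv h (fun x : ℝ => ((1 + x) ^ α + 1) ^ n) 0 < 0 := by
  have hquot := (tendsto_iteratedDeriv_one_add_rpow_add_one_pow_div_descPochhammer_eval hα hαℕ n
    ).eventually (lt_mem_nhds (show (0 : ℝ) < n by positivity))
  refine (frequently_descPochhammer_eval_neg hαℕ).mp (hquot.mono fun h hpos hP => ?_)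
  exact ((div_pos_iff.1 hpos).resolve_left fun h' => h'.2.not_gt hP).1

/-- For coprime positive integers `a`, `b` with `b ≥ 2` (so `a/b ∉ ℤ`) and any
positive integer `k`, the Taylor expansion at `0` of `Ψ x = ((1+x)^(a/b) + 1)^(b*k)` has
infinitely many negative coefficients.  The `h`-th Taylor coefficient is
`iteratedDeriv h Ψ 0 / h!`, whose sign is that of `iteratedDeriv h Ψ 0`. -/
theorem stmt0 (a b k : ℕ) (ha : 0 < a) (hb : 2 ≤ b) (hk : 0 < k)
    (hcop : Nat.Coprime a b) :
    {h : ℕ |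
      iteratedDeriv h (fun x : ℝ => ((1 + x) ^ ((a : ℝ) / b) + 1) ^ (b * k)) 0 / h.factorial
        < 0}.Infinite := by
  have hαℕ : ∀ m : ℕ, (a : ℝ) / b ≠ m := by
    intro m hm
    rw [div_eq_iff (by positivity)] at hm
    have hba : b ∣ a := ⟨m, by exact_mod_cast hm.trans (mul_comm _ _)⟩
    have := hcop.symm.eq_one_of_dvd hba
    omega
  refine Nat.frequently_atTop_iff_infinite.1 ?_
  refine (frequently_iteratedDeriv_one_add_rpow_add_one_pow_neg (by positivity) hαℕ
    (by positivity)).mono fun h hh => div_neg_of_neg_of_pos hh (by positivity)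
end

section
/- Let a, b, k be positive integers. For h > 0 define B_{h,p} = C(kb, p) · (pa/b)(pa/b − 1)···(pa/b − (h−1)) for 0 ≤ p ≤ kb, and A_h = Σ_{p=0}^{kb} B_{h,p}. Then for every p with 2 ≤ p ≤ kb, lim_{h→∞} B_{h,p}/B_{h,1} = 0, provided b does not divide a (so the denominators are nonzero). -/
/-!
Dividing out, `B_{h,p} / B_{h,1} = C(kb,p) / C(kb,1) · ∏_{j<h} (c - j) / (x - j)` with
`x = a/b < c = pa/b`. Once `j > c`, each factor equals `1 - (c - x)/(j - x) ≤ exp (-(c - x)/(j - x))`,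
so the tail of the product is bounded by `exp` of minus a shifted harmonic series, which diverges.
-/

open Filter Topology Finset

theorem tendsto_prod_one_sub_of_not_summable {u : ℕ → ℝ} (hu₀ : ∀ n, 0 ≤ u n)
    (hu₁ : ∀ n, u n ≤ 1) (hu : ¬ Summable u) :
    Tendsto (fun n ↦ ∏ i ∈ range n, (1 - u i)) atTop (𝓝 0) := by
  have hexp : Tendsto (fun n ↦ Real.exp (-∑ i ∈ range n, u i)) atTop (𝓝 0) :=
    Real.tendsto_exp_atBot.comp <| tendsto_neg_atTop_atBot.comp <|
      (not_summable_iff_tendsto_nat_atTop_of_nonneg hu₀).mp hu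
  refine squeeze_zero (fun n ↦ prod_nonneg fun i _ ↦ sub_nonneg.mpr (hu₁ i)) (fun n ↦ ?_) hexp
  rw [← sum_neg_distrib, Real.exp_sum]
  exact prod_le_prod (fun i _ ↦ sub_nonneg.mpr (hu₁ i)) fun i _ ↦ Real.one_sub_le_exp_neg (u i)

theorem tendsto_prod_sub_natCast_div_sub_natCast {x c : ℝ} (hxc : x < c) :
    Tendsto (fun h : ℕ ↦ ∏ j ∈ range h, (c - j) / (x - j)) atTop (𝓝 0) := by
  set N := ⌈c⌉₊
  have hcN : c ≤ N := Nat.le_ceil c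
  set u : ℕ → ℝ := fun i ↦ (c - x) / (N + i - x)
  have hden (i : ℕ) : 0 < (N + i : ℝ) - x := by linarith [(i.cast_nonneg : (0 : ℝ) ≤ i)]
  have hfactor (i : ℕ) : (c - (N + i : ℕ)) / (x - (N + i : ℕ)) = 1 - u i := by
    have hpos : (N + i : ℝ) - x ≠ 0 := (hden i).ne'
    have hneg : x - (N + i : ℝ) ≠ 0 := by linarith [hden i]
    simp only [u, Nat.cast_add]
    field_simp
    ring
  have hu : ¬ Summable u := by
    have hshift : u = fun i : ℕ ↦ (c - x) * (1 / |(i : ℝ) + (N - x)| ^ (1 : ℝ)) := by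
      ext i
      rw [Real.rpow_one, ← add_sub_assoc, add_comm (i : ℝ), abs_of_pos (hden i), mul_one_div]
    rw [hshift, summable_mul_left_iff (sub_ne_zero.mpr hxc.ne'),
      Real.summable_one_div_nat_add_rpow]
    exact lt_irrefl 1
  have htail := tendsto_prod_one_sub_of_not_summable
    (fun i ↦ div_nonneg (sub_nonneg.mpr hxc.le) (hden i).le)
    (fun i ↦ (div_le_one (hden i)).mpr (by linarith [(i.cast_nonneg : (0 : ℝ) ≤ i)])) hu
  rw [← tendsto_add_atTop_iff_nat N]
  refine (mul_zero (∏ j ∈ range N, (c - j) / (x - j)) ▸ htail.const_mul _).congr fun n ↦ ?_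
  rw [add_comm, prod_range_add]
  exact congrArg _ (prod_congr rfl fun i _ ↦ (hfactor i).symm)

theorem stmt1_general (a b k : ℕ) (ha : 0 < a) (hb : 0 < b) :
    ∀ p : ℕ, 2 ≤ p → p ≤ k * b →
      Tendsto
        (fun h : ℕ =>
          ((Nat.choose (k * b) p : ℝ) * ∏ j ∈ Finset.range h, ((p * a : ℝ) / b - j)) /
            ((Nat.choose (k * b) 1 : ℝ) * ∏ j ∈ Finset.range h, ((a : ℝ) / b - j)))
        atTop (nhds 0) := by
  intro p hp _
  have hxc : (a : ℝ) / b < p * a / b := by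
    gcongr
    exact lt_mul_of_one_lt_left (by exact_mod_cast ha) (by exact_mod_cast hp)
  simpa [div_mul_div_comm, prod_div_distrib] using
    (tendsto_prod_sub_natCast_div_sub_natCast hxc).const_mul
      ((Nat.choose (k * b) p : ℝ) / Nat.choose (k * b) 1)

/-- with `B_{h,p} = C(kb,p) ∏_{j=0}^{h-1} (pa/b − j)`, for every `p` with
`2 ≤ p ≤ kb` one has `B_{h,p}/B_{h,1} → 0` as `h → ∞`, provided `b ∤ a`. -/
theorem stmt1 (a b k : ℕ) (ha : 0 < a) (hb : 0 < b) (hk : 0 < k) (hnd : ¬ b ∣ a) :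
    ∀ p : ℕ, 2 ≤ p → p ≤ k * b →
      Tendsto
        (fun h : ℕ =>
          ((Nat.choose (k * b) p : ℝ) * ∏ j ∈ Finset.range h, ((p * a : ℝ) / b - j)) /
            ((Nat.choose (k * b) 1 : ℝ) * ∏ j ∈ Finset.range h, ((a : ℝ) / b - j)))
        atTop (nhds 0) :=
  stmt1_general a b k ha hb
end

section
/- Let α > 0 be a real number. If the Kähler metric on ℂ with Kähler potential Φ(ξ) = α·log(1 + |ξ|²) is projectively induced (i.e. is the pullback of the Fubini–Study metric under some holomorphic map into a complex projective space), then α is a positive integer. -/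
/-!
Write `(α)_k = α(α-1)⋯(α-k+1)`. If `α ≥ 0` is not an integer, put `n = ⌊α⌋`: the factors
`α - j` with `j ≤ n` are positive and the next one, `α - (n+1)`, is negative, so `(α)_{n+2} < 0`.
Hence nonnegativity of all `(α)_k / k!` forces `α ∈ ℕ` (and `(α)_1 = α` rules out `α < 0`).
-/

section

variable {S : Type*} [Ring S] [LinearOrder S] [IsStrictOrderedRing S]

theorem descPochhammer_eval_neg_of_lt_of_lt {n : ℕ} {s : S} (hn : (n : S) < s)
    (hs : s < n + 1) : (descPochhammer S (n + 2)).eval s < 0 := by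
  rw [descPochhammer_succ_eval]
  refine mul_neg_of_pos_of_neg (descPochhammer_pos ?_) ?_
  · simpa using hn
  · push_cast
    exact sub_neg.mpr hs

theorem exists_nat_eq_of_forall_descPochhammer_eval_nonneg [FloorSemiring S] {s : S}
    (h : ∀ k, 0 ≤ (descPochhammer S k).eval s) : ∃ n : ℕ, s = n := by
  have hs : 0 ≤ s := by simpa using h 1
  refine ⟨⌊s⌋₊, ((Nat.floor_le hs).eq_or_lt.resolve_right fun hlt => ?_).symm⟩
  exact (h _).not_gt (descPochhammer_eval_neg_of_lt_of_lt hlt (Nat.lt_floor_add_one s))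

end

/-- by Calabi's criterion, the metric on `ℂ` with potential
`Φ(ξ) = α log(1+|ξ|²)` is projectively induced iff all the generalized binomial
coefficients `C(α,h) = α(α−1)⋯(α−h+1)/h!` (the Taylor coefficients of
`e^Φ − 1 = (1+|ξ|²)^α − 1`) are nonnegative.  If this holds and `α > 0`, then `α` is a
positive integer. -/
theorem stmt3 (α : ℝ) (hα : 0 < α)
    (hproj : ∀ h : ℕ, 0 ≤ (∏ j ∈ Finset.range h, (α - j)) / (h.factorial : ℝ)) :
    ∃ m : ℕ, 0 < m ∧ α = m := by
  obtain ⟨m, rfl⟩ := exists_nat_eq_of_forall_descPochhammer_eval_nonneg (s := α) fun k => by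
    rw [descPochhammer_eval_eq_prod_range]
    simpa [le_div_iff₀, Nat.factorial_pos] using hproj k
  exact ⟨m, by exact_mod_cast hα, rfl⟩
end

section
/- The function h(X) = −c·log(1 − X) with c = (γ + μ)/((μ+1)(d+2)) does not satisfy the ODE (μ X h′(X) + (γ+μ)/(d+2))^d · [X h′(X)]′ = k e^{(d+2) h(X)} on (0,1) for any constant k ∈ ℝ, provided γ, μ, d > 0. -/
/-! Substituting `t = 1/(1-X)` and using `(γ+μ)/(d+2) = c(μ+1)`, the left side becomes
`c^(d+1) (μt+1)^d t²` and the right side `k t^p` with `p = (γ+μ)/(μ+1)`. A power law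
`k t^p` satisfies `f(2) f(8) = f(4)²`, whereas `(2μ+1)(8μ+1) = (4μ+1)² + 2μ`. -/

lemma mul_rpow_mul_mul_rpow_eq_sq (k x r p : ℝ) (hx : 0 ≤ x) (hr : 0 ≤ r) :
    (k * x ^ p) * (k * (x * r ^ 2) ^ p) = (k * (x * r) ^ p) ^ 2 := by
  rw [Real.mul_rpow hx (by positivity), Real.mul_rpow hx hr, ← Real.rpow_pow_comm hr]
  ring

lemma power_law_fails_at_two_four_eight (μ : ℝ) (hμ : 0 < μ) (d : ℕ) (hd : d ≠ 0) :
    ((2 * μ + 1) ^ d * 2 ^ 2) * ((8 * μ + 1) ^ d * 8 ^ 2) ≠ ((4 * μ + 1) ^ d * 4 ^ 2) ^ 2 := by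
  intro h
  have hd' : ((2 * μ + 1) * (8 * μ + 1)) ^ d = ((4 * μ + 1) ^ 2) ^ d := by
    rw [mul_pow, ← pow_mul, mul_comm 2 d, pow_mul]
    linear_combination h / 256
  have := (pow_left_inj₀ (by positivity) (by positivity) hd).mp hd'
  nlinarith

lemma ode_lhs_at_one_sub_inv (μ c a t : ℝ) (d : ℕ) (hac : a = c * (μ + 1)) (ht : t ≠ 0) :
    (μ * c * (1 - t⁻¹) / (1 - (1 - t⁻¹)) + a) ^ d * (c / (1 - (1 - t⁻¹)) ^ 2) =
      c ^ (d + 1) * ((μ * t + 1) ^ d * t ^ 2) := by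
  have hbase : μ * c * (1 - t⁻¹) / t⁻¹ + a = c * (μ * t + 1) := by
    rw [hac]; field_simp; ring
  rw [sub_sub_cancel, hbase, mul_pow, inv_pow, div_inv_eq_mul]
  ring

/-- with `c = (γ+μ)/((μ+1)(d+2))`, the function `h(X) = −c log(1−X)`
does not satisfy the ODE
`(μ X h'(X) + (γ+μ)/(d+2))^d [X h'(X)]' = k e^{(d+2) h(X)}` on `(0,1)` for any real
constant `k`; explicitly, there is no `k ∈ ℝ` such that
`(μ c X/(1−X) + (γ+μ)/(d+2))^d · c/(1−X)² = k (1−X)^{−(γ+μ)/(μ+1)}` for all `X ∈ (0,1)`. -/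
theorem stmt12 (γ μ : ℝ) (d : ℕ) (hγ : 0 < γ) (hμ : 0 < μ) (hd : 1 ≤ d) :
    ¬ ∃ k : ℝ, ∀ X ∈ Set.Ioo (0 : ℝ) 1,
        (μ * ((γ + μ) / ((μ + 1) * (d + 2))) * X / (1 - X) + (γ + μ) / (d + 2)) ^ d *
            (((γ + μ) / ((μ + 1) * (d + 2))) / (1 - X) ^ 2) =
          k * (1 - X) ^ (-((γ + μ) / (μ + 1))) := by
  rintro ⟨k, hk⟩
  set c : ℝ := (γ + μ) / ((μ + 1) * (d + 2))
  set p : ℝ := (γ + μ) / (μ + 1)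
  have hc : c ≠ 0 := by positivity
  have hac : (γ + μ) / (d + 2) = c * (μ + 1) := by simp only [c]; field_simp
  have power_law : ∀ t : ℝ, 1 < t → c ^ (d + 1) * ((μ * t + 1) ^ d * t ^ 2) = k * t ^ p := by
    intro t ht
    have hX : 1 - t⁻¹ ∈ Set.Ioo (0 : ℝ) 1 :=
      ⟨sub_pos.mpr (inv_lt_one_of_one_lt₀ ht), sub_lt_self 1 (by positivity)⟩
    have := hk _ hX
    rwa [ode_lhs_at_one_sub_inv μ c _ t d hac (by positivity), sub_sub_cancel,
      Real.rpow_neg (by positivity), Real.inv_rpow (by positivity), inv_inv] at this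
  have key := mul_rpow_mul_mul_rpow_eq_sq k 2 2 p (by norm_num) (by norm_num)
  norm_num only at key
  rw [← power_law 2 (by norm_num), ← power_law 4 (by norm_num), ← power_law 8 (by norm_num)]
    at key
  refine power_law_fails_at_two_four_eight μ hμ d (by omega)
    (mul_left_cancel₀ (pow_ne_zero 2 (pow_ne_zero (d + 1) hc)) ?_)
  linear_combination key
end

section
/- Let μ = a/(2b) with a, b coprime positive integers, and suppose μ ∉ ℤ. Then the Taylor expansion in x around 0 of Φ(x) = (((1+x)^{a/(2b)} + 1)·(1+x)^{a/(2b)})^{bk} has at least one negative coefficient, for every positive integer k. -/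
/-!
With `m = b k` and `μ = a / (2b)`, the binomial theorem gives
`Φ(x) = ∑_{j ≤ m} C(m, j) (1 + x)^{μ (m + j)}`, so `h!` times the `h`-th Taylor coefficient is
`∑_j C(m, j) · t_j (t_j - 1) ⋯ (t_j - h + 1)` with `t_j = μ (m + j)`. Terms with `t_j ∈ ℕ` vanish
for large `h`, and since `μ ∉ ℤ` one of `t_0, t_1` is not a natural number. Write `h = H + d`
with `H` above all exponents: the falling factorial of `t` becomes `(-1)^d` times a fixed number
times the rising factorial `(H - t)^{(d)}`, and `u^{(d)} / v^{(d)} → 0` for `0 < u < v` because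
`∏ (1 - (v - u)/(v + i)) ≤ exp (-(v - u) ∑ 1/(v + i))` and the harmonic series diverges. So the
smallest non-natural exponent dominates and the sign of the coefficient alternates in `d`.
-/

open Finset Filter Real Topology Polynomial

theorem ascPochhammer_eval_le_mul_exp {u v : ℝ} (hu : 0 < u) (huv : u ≤ v) (d : ℕ) :
    (ascPochhammer ℝ d).eval u ≤
      (ascPochhammer ℝ d).eval v * exp (-(v - u) * ∑ i ∈ range d, 1 / (i + v)) := by
  induction d with
  | zero => simp
  | succ d ih =>
    have hv : 0 < d + v := by positivity [hu.trans_le huv]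
    have hstep : u + d ≤ (v + d) * exp (-(v - u) * (1 / (d + v))) :=
      calc u + d = (v + d) * (-(v - u) * (1 / (d + v)) + 1) := by field_simp; ring
        _ ≤ _ := mul_le_mul_of_nonneg_left (add_one_le_exp _) (by linarith)
    have hpos : 0 ≤ (ascPochhammer ℝ d).eval v := (ascPochhammer_pos d v (by linarith)).le
    rw [ascPochhammer_succ_eval, ascPochhammer_succ_eval, sum_range_succ, mul_add (-(v - u)),
      exp_add]
    calc (ascPochhammer ℝ d).eval u * (u + d)
        ≤ (ascPochhammer ℝ d).eval v * exp (-(v - u) * ∑ i ∈ range d, 1 / (i + v)) * (u + d) :=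
          mul_le_mul_of_nonneg_right ih (by positivity)
      _ ≤ (ascPochhammer ℝ d).eval v * exp (-(v - u) * ∑ i ∈ range d, 1 / (i + v)) *
            ((v + d) * exp (-(v - u) * (1 / (d + v)))) :=
          mul_le_mul_of_nonneg_left hstep (by positivity)
      _ = _ := by ring

theorem tendsto_ascPochhammer_eval_div {u v : ℝ} (hu : 0 < u) (huv : u < v) :
    Tendsto (fun d => (ascPochhammer ℝ d).eval u / (ascPochhammer ℝ d).eval v) atTop (𝓝 0) := by
  have hv : 0 < v := hu.trans huv
  have hharmonic : Tendsto (fun d => ∑ i ∈ range d, 1 / ((i : ℝ) + v)) atTop atTop := by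
    rw [← not_summable_iff_tendsto_nat_atTop_of_nonneg fun i => by positivity]
    have := (Real.summable_one_div_nat_add_rpow v 1).not.mpr (lt_irrefl 1)
    convert this using 3 with i
    rw [abs_of_pos (by positivity), rpow_one]
  have hexp : Tendsto (fun d => exp (-(v - u) * ∑ i ∈ range d, 1 / ((i : ℝ) + v))) atTop (𝓝 0) :=
    tendsto_exp_atBot.comp (hharmonic.const_mul_atTop_of_neg (by linarith))
  refine tendsto_of_tendsto_of_tendsto_of_le_of_le tendsto_const_nhds hexp
    (fun d => div_nonneg (ascPochhammer_pos d u hu).le (ascPochhammer_pos d v hv).le)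
    (fun d => ?_)
  rw [div_le_iff₀ (ascPochhammer_pos d v hv), mul_comm]
  exact ascPochhammer_eval_le_mul_exp hu huv.le d

theorem descPochhammer_eval_add {R : Type*} [CommRing R] (n d : ℕ) (t : R) :
    (descPochhammer R (n + d)).eval t =
      (descPochhammer R n).eval t * ((-1) ^ d * (ascPochhammer R d).eval (n - t)) := by
  rw [← descPochhammer_mul, eval_mul, eval_comp, eval_sub, eval_X, eval_natCast,
    ← neg_sub t (n : R), ascPochhammer_eval_neg_eq_descPochhammer, ← mul_assoc ((-1) ^ d),
    ← mul_pow]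
  simp

theorem exists_eq_natCast_of_descPochhammer_eval_eq_zero {n : ℕ} {t : ℝ}
    (h : (descPochhammer ℝ n).eval t = 0) : ∃ k : ℕ, t = k := by
  rw [descPochhammer_eval_eq_prod_range, prod_eq_zero_iff] at h
  obtain ⟨k, -, hk⟩ := h
  exact ⟨k, sub_eq_zero.1 hk⟩

theorem iteratedDeriv_one_add_rpow (r x : ℝ) (h : ℕ) :
    iteratedDeriv h (fun y => (1 + y) ^ r) x = (descPochhammer ℝ h).eval r * (1 + x) ^ (r - h) := by
  rw [iteratedDeriv_comp_const_add h (fun y => y ^ r) 1, iteratedDeriv_eq_iterate]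
  exact iter_deriv_rpow_const r (1 + x) h

theorem tendsto_sum_mul_ascPochhammer_eval_div {ι : Type*} (s : Finset ι) (a v : ι → ℝ) {j₀ : ι}
    (hj₀ : j₀ ∈ s) (hv₀ : 0 < v j₀) (hv : ∀ j ∈ s, j ≠ j₀ → a j ≠ 0 → 0 < v j ∧ v j < v j₀) :
    Tendsto (fun d => (∑ j ∈ s, a j * (ascPochhammer ℝ d).eval (v j)) /
      (ascPochhammer ℝ d).eval (v j₀)) atTop (𝓝 (a j₀)) := by
  classical
  simp_rw [sum_div, mul_div_assoc]
  rw [← sum_ite_eq_of_mem' s j₀ a hj₀]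
  refine tendsto_finsetSum _ fun j hj => ?_
  split_ifs with hjj₀
  · subst hjj₀
    refine tendsto_const_nhds.congr fun d => ?_
    rw [div_self (ascPochhammer_pos d _ hv₀).ne', mul_one]
  · by_cases ha : a j = 0
    · simp [ha]
    obtain ⟨hpos, hlt⟩ := hv j hj hjj₀ ha
    simpa using (tendsto_ascPochhammer_eval_div hpos hlt).const_mul (a j)

theorem exists_neg_one_pow_mul_neg {g : ℕ → ℝ} {a : ℝ} (hg : ∀ᶠ d in atTop, 0 < a * g d) :
    ∃ d, (-1) ^ d * g d < 0 := by
  obtain ⟨N, hN⟩ := eventually_atTop.1 hg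
  rcases le_or_gt a 0 with ha | ha
  · refine ⟨2 * N, ?_⟩
    rw [pow_mul, neg_one_sq, one_pow, one_mul]
    exact neg_of_mul_pos_right (hN _ (by omega)) ha
  · refine ⟨2 * N + 1, ?_⟩
    rw [pow_succ, pow_mul, neg_one_sq, one_pow, one_mul, neg_one_mul, neg_neg_iff_pos]
    exact pos_of_mul_pos_right (hN _ (by omega)) ha.le

theorem exists_sum_mul_descPochhammer_eval_neg {ι : Type*} (s : Finset ι) (c t : ι → ℝ)
    (hc : ∀ j ∈ s, c j ≠ 0) (ht : Set.InjOn t s) (hnat : ∃ j ∈ s, ∀ k : ℕ, t j ≠ k) :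
    ∃ h : ℕ, ∑ j ∈ s, c j * (descPochhammer ℝ h).eval (t j) < 0 := by
  classical
  obtain ⟨j₀, hj₀, hmin⟩ := (s.filter fun j => ∀ k : ℕ, t j ≠ k).exists_min_image t
    (by simpa [Finset.Nonempty] using hnat)
  rw [mem_filter] at hj₀
  obtain ⟨H, hH⟩ : ∃ H : ℕ, ∀ j ∈ s, t j < H := by
    obtain ⟨H, hH⟩ := exists_nat_gt (∑ j ∈ s, |t j|)
    exact ⟨H, fun j hj => (le_abs_self _).trans_lt
      ((single_le_sum (fun i _ => abs_nonneg (t i)) hj).trans_lt hH)⟩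
  set a : ι → ℝ := fun j => c j * (descPochhammer ℝ H).eval (t j)
  have ha₀ : a j₀ ≠ 0 := mul_ne_zero (hc _ hj₀.1) fun h =>
    (exists_eq_natCast_of_descPochhammer_eval_eq_zero h).elim hj₀.2
  have hdom : ∀ j ∈ s, j ≠ j₀ → a j ≠ 0 → t j₀ < t j := by
    intro j hj hjj₀ haj
    have hnatj : ∀ k : ℕ, t j ≠ k := by
      intro k hk
      have hkH : k < H := by exact_mod_cast hk ▸ hH j hj
      exact haj (mul_eq_zero_of_right _ (hk ▸ descPochhammer_eval_coe_nat_of_lt hkH))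
    exact (hmin j (mem_filter.2 ⟨hj, hnatj⟩)).lt_of_ne fun h => hjj₀ (ht hj hj₀.1 h.symm)
  have hlim := tendsto_sum_mul_ascPochhammer_eval_div s a (fun j => H - t j) hj₀.1
    (sub_pos.2 (hH _ hj₀.1)) fun j hj hjj₀ haj =>
      ⟨sub_pos.2 (hH j hj), sub_lt_sub_left (hdom j hj hjj₀ haj) _⟩
  have hev : ∀ᶠ d in atTop, 0 < a j₀ * ∑ j ∈ s, a j * (ascPochhammer ℝ d).eval (H - t j) := by
    filter_upwards [(hlim.const_mul (a j₀)).eventually_const_lt (mul_self_pos.2 ha₀)] with d hd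
    rw [← mul_div_assoc] at hd
    exact (div_pos_iff_of_pos_right (ascPochhammer_pos d _ (sub_pos.2 (hH _ hj₀.1)))).1 hd
  obtain ⟨d, hd⟩ := exists_neg_one_pow_mul_neg hev
  refine ⟨H + d, hd.trans_eq' ?_⟩
  rw [mul_sum]
  refine sum_congr rfl fun j _ => ?_
  rw [descPochhammer_eval_add]
  ring

theorem iteratedDeriv_sum_mul_one_add_rpow_zero {ι : Type*} (s : Finset ι) (c t : ι → ℝ)
    (h : ℕ) :
    iteratedDeriv h (fun x => ∑ j ∈ s, c j * (1 + x) ^ t j) 0 =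
      ∑ j ∈ s, c j * (descPochhammer ℝ h).eval (t j) := by
  rw [iteratedDeriv_fun_sum fun j _ => ?_]
  · refine sum_congr rfl fun j _ => ?_
    rw [iteratedDeriv_const_mul_field, iteratedDeriv_one_add_rpow]
    simp
  · exact contDiffAt_const.mul
      ((contDiffAt_const.add contDiffAt_id).rpow_const_of_ne (by norm_num : (1 : ℝ) + 0 ≠ 0))

theorem rpow_add_one_mul_rpow_pow {z : ℝ} (hz : 0 < z) (μ : ℝ) (m : ℕ) :
    ((z ^ μ + 1) * z ^ μ) ^ m = ∑ j ∈ range (m + 1), (m.choose j : ℝ) * z ^ (μ * (m + j)) := by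
  have hpow (n : ℕ) : (z ^ μ) ^ n = z ^ (μ * n) := by
    rw [← rpow_natCast, ← rpow_mul hz.le]
  rw [mul_pow, add_pow, sum_mul]
  refine sum_congr rfl fun j _ => ?_
  rw [hpow, hpow, one_pow, mul_one, mul_add, rpow_add hz]
  ring

theorem stmt17_general (a b k : ℕ) (hb : 0 < b) (hk : 0 < k) (hni : ¬ (2 * b) ∣ a) :
    ∃ h : ℕ,
      iteratedDeriv h
          (fun x : ℝ =>
            (((1 + x) ^ ((a : ℝ) / (2 * b)) + 1) * (1 + x) ^ ((a : ℝ) / (2 * b))) ^ (b * k))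
          0 / (h.factorial : ℝ) < 0 := by
  set μ : ℝ := a / (2 * b) with hμ
  set m := b * k
  have hμ_int (z : ℤ) : μ ≠ z := by
    intro hz
    rw [hμ, div_eq_iff (by positivity)] at hz
    have haz : (a : ℝ) = 2 * b * z := by linarith
    exact hni (Int.natCast_dvd_natCast.1 ⟨z, by exact_mod_cast haz⟩)
  have hΦ : (fun x : ℝ => (((1 + x) ^ μ + 1) * (1 + x) ^ μ) ^ m) =ᶠ[𝓝 0]
      fun x => ∑ j ∈ range (m + 1), (m.choose j : ℝ) * (1 + x) ^ (μ * (m + j)) := by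
    filter_upwards [eventually_gt_nhds (show (-1 : ℝ) < 0 by norm_num)] with x hx
    exact rpow_add_one_mul_rpow_pow (by linarith) μ m
  have hinj : Set.InjOn (fun j : ℕ => μ * (m + j)) (range (m + 1)) := fun i _ j _ hij => by
    have hμ0 : μ ≠ 0 := by simpa using hμ_int 0
    exact_mod_cast add_left_cancel (mul_left_cancel₀ hμ0 hij)
  have hnat : ∃ j ∈ range (m + 1), ∀ n : ℕ, μ * (m + j) ≠ n := by
    by_contra! hall
    obtain ⟨n₀, hn₀⟩ := hall 0 (by simp)
    obtain ⟨n₁, hn₁⟩ := hall 1 (by simp [m, hb, hk])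
    push_cast at hn₀ hn₁
    exact hμ_int (n₁ - n₀) (by push_cast; linarith)
  obtain ⟨h, hneg⟩ := exists_sum_mul_descPochhammer_eval_neg (range (m + 1))
    (fun j => (m.choose j : ℝ)) _ (fun j hj => by
      have := Nat.choose_pos (mem_range_succ_iff.1 hj); positivity) hinj hnat
  refine ⟨h, div_neg_of_neg_of_pos ?_ (by positivity)⟩
  rwa [hΦ.iteratedDeriv_eq, iteratedDeriv_sum_mul_one_add_rpow_zero]

/-- let `μ = a/(2b)` with `a`, `b` coprime positive integers and
`μ ∉ ℤ` (i.e. `2b ∤ a`).  Then for every positive integer `k`, the Taylor expansion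
at `0` of `Φ(x) = (((1+x)^{a/(2b)} + 1) (1+x)^{a/(2b)})^{bk}` has at least one
negative coefficient. -/
theorem stmt17 (a b k : ℕ) (ha : 0 < a) (hb : 0 < b) (hk : 0 < k)
    (hcop : Nat.Coprime a b) (hni : ¬ (2 * b) ∣ a) :
    ∃ h : ℕ,
      iteratedDeriv h
          (fun x : ℝ =>
            (((1 + x) ^ ((a : ℝ) / (2 * b)) + 1) * (1 + x) ^ ((a : ℝ) / (2 * b))) ^ (b * k))
          0 / (h.factorial : ℝ) < 0 :=
  stmt17_general a b k hb hk hni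
end
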